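/- Removing all edges incident to a single vertex v decreases the potential φ(G) = Σ_{u : deg(u) ≥ k}(deg(u) − k) by at most deg(v) + max(deg(v) − k, 0). In particular, if every vertex of G has degree ≤ k + d, then φ(G − v) ≥ φ(G) − (2d + k) for every v, and consequently if G can be brought into H_k by deleting edges at d vertices (all of degree ≤ k + d), then φ(G) ≤ d(2d + k) = 2d² + kd. -/

import Mathlib

/-!
Removing the edges at `v` lowers the degree of each neighbour of `v` by one and the degree of `v`
to zero. Since `x ↦ max (x - k) 0` is monotone and 1-Lipschitz, every neighbour's contribution to
`φ` drops by at most one and the contribution of `v` disappears, which gives the bound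
`deg v + max (deg v - k) 0`. Removing the edges at the vertices of `S` one at a time, each step
costs at most `2d + k` when all degrees are at most `k + d`; if the result lies in `H_k`, its
potential is zero, so `φ(G) ≤ d (2d + k)`.
-/

/-- The graph obtained from `G` by removing all edges incident to a vertex of `S`. -/
def remSet {V : Type*} (G : SimpleGraph V) (S : Set V) : SimpleGraph V where
  Adj a b := G.Adj a b ∧ a ∉ S ∧ b ∉ S
  symm := ⟨by rintro a b ⟨h, ha, hb⟩; exact ⟨h.symm, hb, ha⟩⟩
  loopless := ⟨by rintro a ⟨h, -, -⟩; exact G.irrefl h⟩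

/-- The excess-degree potential `φ(G) = Σ_{v : deg v ≥ k} (deg v − k)`. -/
noncomputable def pot {V : Type*} [Fintype V] (k : ℕ) (G : SimpleGraph V) : ℝ :=
  ∑ v : V, max (((G.neighborSet v).ncard : ℝ) - (k : ℝ)) 0

open Finset

section

variable {V : Type*}

section remSet

variable (G : SimpleGraph V) (S T : Set V)

lemma remSet_le : remSet G S ≤ G := fun _ _ h => h.1

@[simp]
lemma remSet_empty : remSet G ∅ = G := by
  ext a b; simp [remSet]

lemma remSet_remSet : remSet (remSet G S) T = remSet G (S ∪ T) := by
  ext a b; simp only [remSet, Set.mem_union]; tauto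

lemma neighborSet_remSet_of_notMem {u : V} (hu : u ∉ S) :
    (remSet G S).neighborSet u = G.neighborSet u \ S := by
  ext w; simp only [SimpleGraph.mem_neighborSet, Set.mem_sdiff, remSet]; tauto

lemma neighborSet_remSet_of_mem {u : V} (hu : u ∈ S) : (remSet G S).neighborSet u = ∅ := by
  ext w; simp only [SimpleGraph.mem_neighborSet, Set.mem_empty_iff_false, iff_false, remSet]; tauto

end remSet

noncomputable def excess (k : ℕ) (G : SimpleGraph V) (u : V) : ℝ :=
  max (((G.neighborSet u).ncard : ℝ) - k) 0

lemma pot_eq_sum_excess [Fintype V] (k : ℕ) (G : SimpleGraph V) :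
    pot k G = ∑ u, excess k G u := rfl

lemma excess_sub_excess_le (k : ℕ) (G H : SimpleGraph V) (u : V) :
    excess k G u - excess k H u ≤
      max (((G.neighborSet u).ncard : ℝ) - (H.neighborSet u).ncard) 0 :=
  (max_sub_max_le_max _ _ _ _).trans_eq (by simp)

lemma ncard_neighborSet_le_of_le [Finite V] {G H : SimpleGraph V} (h : H ≤ G) (u : V) :
    (H.neighborSet u).ncard ≤ (G.neighborSet u).ncard :=
  Set.ncard_le_ncard (fun _ hw => h hw)

lemma excess_le_of_le [Finite V] (k : ℕ) {G H : SimpleGraph V} (h : H ≤ G) (u : V) :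
    excess k H u ≤ excess k G u := by
  unfold excess
  have := ncard_neighborSet_le_of_le h u
  gcongr

lemma excess_remSet_self (k : ℕ) (G : SimpleGraph V) (v : V) :
    excess k (remSet G {v}) v = 0 := by
  simp [excess, neighborSet_remSet_of_mem G {v} (Set.mem_singleton v)]

lemma excess_sub_excess_remSet_le [Finite V] [DecidableEq V] (k : ℕ) (G : SimpleGraph V)
    [DecidableRel G.Adj] (v u : V) :
    excess k G u - excess k (remSet G {v}) u ≤
      (if u = v then excess k G v else 0) + if G.Adj v u then 1 else 0 := by
  by_cases huv : u = v
  · subst huv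
    simp [excess_remSet_self]
  have hnbr : (remSet G {v}).neighborSet u = G.neighborSet u \ {v} :=
    neighborSet_remSet_of_notMem G {v} huv
  refine (excess_sub_excess_le k G _ u).trans ?_
  rw [if_neg huv, zero_add, hnbr]
  split_ifs with hadj
  · refine max_le ?_ zero_le_one
    have := Set.ncard_le_ncard_sdiff_add_ncard (G.neighborSet u) {v}
    rw [Set.ncard_singleton] at this
    rw [sub_le_iff_le_add']
    exact_mod_cast this
  · have hv : v ∉ G.neighborSet u := fun h => hadj h.symm
    simp [Set.sdiff_singleton_eq_self hv]

lemma ncard_neighborSet_eq_card_filter [Fintype V] (G : SimpleGraph V) [DecidableRel G.Adj]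
    (v : V) : (G.neighborSet v).ncard = #{u | G.Adj v u} := by
  rw [← Set.ncard_coe_finset]
  congr 1
  ext u
  simp

lemma pot_sub_pot_remSet_singleton_le [Fintype V] (k : ℕ) (G : SimpleGraph V) (v : V) :
    pot k G - pot k (remSet G {v}) ≤ (G.neighborSet v).ncard + excess k G v := by
  classical
  calc pot k G - pot k (remSet G {v})
      = ∑ u, (excess k G u - excess k (remSet G {v}) u) := by
        rw [pot_eq_sum_excess, pot_eq_sum_excess, sum_sub_distrib]
    _ ≤ ∑ u, ((if u = v then excess k G v else 0) + if G.Adj v u then 1 else 0) :=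
        sum_le_sum fun u _ => excess_sub_excess_remSet_le k G v u
    _ = (G.neighborSet v).ncard + excess k G v := by
        rw [sum_add_distrib, sum_ite_eq', sum_boole, if_pos (mem_univ v),
          ncard_neighborSet_eq_card_filter, add_comm]

lemma pot_sub_pot_remSet_le [Fintype V] (k : ℕ) (G : SimpleGraph V) (T : Finset V) {c : ℝ}
    (hc : ∀ v ∈ T, (G.neighborSet v).ncard + excess k G v ≤ c) :
    pot k G - pot k (remSet G T) ≤ #T * c := by
  classical
  induction T using Finset.induction_on with
  | empty => simp
  | insert v T hvT ih =>
    set H := remSet G T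
    have hstep : pot k H - pot k (remSet G ↑(insert v T)) ≤ c := by
      rw [coe_insert, ← Set.union_singleton, ← remSet_remSet]
      calc pot k H - pot k (remSet H {v})
          ≤ (H.neighborSet v).ncard + excess k H v := pot_sub_pot_remSet_singleton_le k H v
        _ ≤ (G.neighborSet v).ncard + excess k G v :=
            add_le_add (by exact_mod_cast ncard_neighborSet_le_of_le (remSet_le G _) v)
              (excess_le_of_le k (remSet_le G _) v)
        _ ≤ c := hc v (mem_insert_self v T)
    have := ih fun u hu => hc u (mem_insert_of_mem hu)
    rw [card_insert_of_notMem hvT, Nat.cast_succ]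
    linarith

lemma pot_eq_zero_of_forall_ncard_le [Fintype V] {k : ℕ} {G : SimpleGraph V}
    (h : ∀ u, (G.neighborSet u).ncard ≤ k) : pot k G = 0 :=
  sum_eq_zero fun u _ => max_eq_right (sub_nonpos.2 (by exact_mod_cast h u))

lemma ncard_add_excess_le {k d : ℕ} {G : SimpleGraph V} {v : V}
    (h : (G.neighborSet v).ncard ≤ k + d) :
    (G.neighborSet v).ncard + excess k G v ≤ 2 * (d : ℝ) + k := by
  have hdeg : ((G.neighborSet v).ncard : ℝ) ≤ k + d := by exact_mod_cast h
  have : excess k G v ≤ d := max_le (by linarith) d.cast_nonneg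
  linarith

end

/-- (a) Removing all edges at a single vertex `v` decreases the potential `φ` by at most
`deg v + max(deg v − k, 0)`.  (b) Hence if every vertex of `G` has degree `≤ k + d`, then
`φ(G − v) ≥ φ(G) − (2d + k)` for every `v`.  (c) Consequently, if `G` (with all degrees
`≤ k + d`) can be brought into `H_k` by deleting all edges at some set of `d` vertices,
then `φ(G) ≤ d·(2d + k)`. -/
theorem stmt_18 {V : Type*} [Fintype V] (k d : ℕ) (G : SimpleGraph V) :
    (∀ v : V, pot k G - pot k (remSet G {v}) ≤
      ((G.neighborSet v).ncard : ℝ) + max (((G.neighborSet v).ncard : ℝ) - (k : ℝ)) 0) ∧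
    ((∀ u : V, (G.neighborSet u).ncard ≤ k + d) →
      ∀ v : V, pot k G - (2 * (d : ℝ) + (k : ℝ)) ≤ pot k (remSet G {v})) ∧
    ((∀ u : V, (G.neighborSet u).ncard ≤ k + d) →
      ∀ S : Finset V, S.card = d →
        (∀ u : V, ((remSet G (S : Set V)).neighborSet u).ncard ≤ k) →
        pot k G ≤ (d : ℝ) * (2 * (d : ℝ) + (k : ℝ))) := by
  refine ⟨pot_sub_pot_remSet_singleton_le k G, fun hdeg v => ?_, fun hdeg S hS hHk => ?_⟩
  · have := (pot_sub_pot_remSet_singleton_le k G v).trans (ncard_add_excess_le (hdeg v))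
    linarith
  · have := pot_sub_pot_remSet_le k G S fun v _ => ncard_add_excess_le (hdeg v)
    rw [pot_eq_zero_of_forall_ncard_le hHk, hS] at this
    linarith
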